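/- Let 0 < β < α, G an n-vertex α-expander, X ⊆ V(G), and let Y ⊆ V(G)\X be a maximum-size set with |N_{G−X}(Y)| < β|Y| and |Y| ≤ n/2. Then for every non-empty U ⊆ V(G)\(X∪Y) with |Y ∪ U| ≤ n/2, we have |N_{G−(X∪Y)}(U)| ≥ β|U|. -/

import Mathlib

open Finset

variable {V : Type*}

/-- The external neighborhood of a vertex set `X` in a graph `G`:
vertices outside `X` with a neighbor in `X`. -/
noncomputable def extNbhd [Fintype V] (G : SimpleGraph V) (X : Finset V) : Finset V :=
  @Finset.filter V (fun v => v ∉ X ∧ ∃ u ∈ X, G.Adj u v) (Classical.decPred _) Finset.univ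

/-- An `n`-vertex graph is an `α`-expander if every vertex set of size at most `n/2`
has external neighborhood of size at least `α` times its size. -/
def IsExpander [Fintype V] (G : SimpleGraph V) (α : ℝ) : Prop :=
  ∀ X : Finset V, (X.card : ℝ) ≤ (Fintype.card V : ℝ) / 2 →
    α * (X.card : ℝ) ≤ ((extNbhd G X).card : ℝ)

/-!
If `U` expanded by less than `β` in `G - (X ∪ Y)`, then `Y ∪ U` would expand by less than `β`
in `G - X`, since its neighborhood there is covered by that of `Y` in `G - X` and that of `U`
in `G - (X ∪ Y)`. As `Y ∪ U` is still disjoint from `X` and of size at most `n/2`, this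
contradicts the maximality of `Y`.
-/

theorem mem_extNbhd [Fintype V] {G : SimpleGraph V} {A : Finset V} {v : V} :
    v ∈ extNbhd G A ↔ v ∉ A ∧ ∃ u ∈ A, G.Adj u v := by
  simp [extNbhd]

section

variable [Fintype V] [DecidableEq V]

theorem extNbhd_union_sdiff_subset (G : SimpleGraph V) (A B X : Finset V) :
    extNbhd G (A ∪ B) \ X ⊆ (extNbhd G A \ X) ∪ (extNbhd G B \ (X ∪ A)) := by
  intro v hv
  simp only [mem_sdiff, mem_union, mem_extNbhd, not_or] at hv ⊢
  obtain ⟨⟨⟨hvA, hvB⟩, u, hu, hadj⟩, hvX⟩ := hv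
  rcases hu with huA | huB
  · exact Or.inl ⟨⟨hvA, u, huA, hadj⟩, hvX⟩
  · exact Or.inr ⟨⟨hvB, u, huB, hadj⟩, hvX, hvA⟩

theorem card_extNbhd_union_sdiff_le (G : SimpleGraph V) (A B X : Finset V) :
    #(extNbhd G (A ∪ B) \ X) ≤ #(extNbhd G A \ X) + #(extNbhd G B \ (X ∪ A)) :=
  (card_le_card (extNbhd_union_sdiff_subset G A B X)).trans (card_union_le _ _)

end

theorem stmt3_general [Fintype V] [DecidableEq V] (G : SimpleGraph V) (β : ℝ)
    (X Y : Finset V)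
    (hYdisj : Disjoint Y X)
    (hYexp : ((extNbhd G Y \ X).card : ℝ) < β * (Y.card : ℝ))
    (hYmax : ∀ Z : Finset V, Disjoint Z X →
      ((extNbhd G Z \ X).card : ℝ) < β * (Z.card : ℝ) →
      (Z.card : ℝ) ≤ (Fintype.card V : ℝ) / 2 → Z.card ≤ Y.card)
    (U : Finset V) (hU : U.Nonempty) (hUdisj : Disjoint U (X ∪ Y))
    (hYU : ((Y ∪ U).card : ℝ) ≤ (Fintype.card V : ℝ) / 2) :
    β * (U.card : ℝ) ≤ ((extNbhd G U \ (X ∪ Y)).card : ℝ) := by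
  by_contra! hUexp
  obtain ⟨hUX, hUY⟩ := disjoint_union_right.mp hUdisj
  have hcard_YU : #(Y ∪ U) = #Y + #U := card_union_of_disjoint hUY.symm
  have hYUexp : (#(extNbhd G (Y ∪ U) \ X) : ℝ) < β * #(Y ∪ U) := by
    have hle : (#(extNbhd G (Y ∪ U) \ X) : ℝ) ≤
        #(extNbhd G Y \ X) + #(extNbhd G U \ (X ∪ Y)) := by
      exact_mod_cast card_extNbhd_union_sdiff_le G Y U X
    rw [hcard_YU, Nat.cast_add, mul_add]
    linarith
  have hmax := hYmax (Y ∪ U) (disjoint_union_left.mpr ⟨hYdisj, hUX⟩) hYUexp hYU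
  have hU_pos := card_pos.mpr hU
  omega

/-- With Y a maximum-size "bad" set for G-X, every non-empty U ⊆ V∖(X∪Y) with
|Y ∪ U| ≤ n/2 expands in G-(X∪Y) by a factor β. -/
theorem stmt3 [Fintype V] [DecidableEq V] (G : SimpleGraph V) (α β : ℝ)
    (hβ : 0 < β) (hβα : β < α) (hG : IsExpander G α) (X Y : Finset V)
    (hYdisj : Disjoint Y X)
    (hYexp : ((extNbhd G Y \ X).card : ℝ) < β * (Y.card : ℝ))
    (hYhalf : (Y.card : ℝ) ≤ (Fintype.card V : ℝ) / 2)
    (hYmax : ∀ Z : Finset V, Disjoint Z X →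
      ((extNbhd G Z \ X).card : ℝ) < β * (Z.card : ℝ) →
      (Z.card : ℝ) ≤ (Fintype.card V : ℝ) / 2 → Z.card ≤ Y.card)
    (U : Finset V) (hU : U.Nonempty) (hUdisj : Disjoint U (X ∪ Y))
    (hYU : ((Y ∪ U).card : ℝ) ≤ (Fintype.card V : ℝ) / 2) :
    β * (U.card : ℝ) ≤ ((extNbhd G U \ (X ∪ Y)).card : ℝ) :=
  stmt3_general G β X Y hYdisj hYexp hYmax U hU hUdisj hYU
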